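/- Let λ = (λ₁,λ₂,λ₃) ∈ ℂ³ with λ₁+λ₂+λ₃ = 0. There exist constants C > 0 and N > 0 (depending only on λ) such that for all y₁,y₂ > 0, |W_λ(y₁,y₂)| ≤ C·(y₁^{N}+y₁^{−N})·(y₂^{N}+y₂^{−N})·e^{−2π(y₁+y₂)}. -/

import Mathlib

/-!
Bounding `cosh (ν t)` by `exp (‖ν‖ t)` gives `‖K_ν(u)‖ ≪ (1 + u^(-M)) e^(-u)`. In the
Vinogradov–Takhtajan integral both Bessel arguments are at least `2π yᵢ`, which produces the factor
`e^(-2π(y₁+y₂))`. The surplus `√(1+x) + √(1+x⁻¹) - 2 ≥ max(x, x⁻¹)^(1/2) / 4` in the exponent then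
decays fast enough to dominate the rest of the integrand by a multiple of `(1 + x²)⁻¹`, at the price
of powers of `max(yᵢ, yᵢ⁻¹) ≤ yᵢ^N + yᵢ^(-N)`.
-/

open scoped Real

noncomputable section

/-- The modified Bessel function of the second kind,
`K_ν(u) = ∫₀^∞ e^{-u cosh t} cosh(νt) dt`. -/
def Kbessel (ν : ℂ) (u : ℝ) : ℂ :=
  ∫ t in Set.Ioi (0:ℝ), Complex.exp (-(u : ℂ) * Real.cosh t) * Complex.cosh (ν * t)

/-- The decaying `SL(3)` Whittaker function, via the Vinogradov–Takhtajan formula. -/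
def W (l₁ l₂ l₃ : ℂ) (y₁ y₂ : ℝ) : ℂ :=
  4 * (y₁ : ℂ) ^ (1 - l₂ / 2) * (y₂ : ℂ) ^ (1 + l₂ / 2) *
    ∫ x in Set.Ioi (0:ℝ),
      Kbessel ((l₁ - l₃) / 2) (2 * π * y₁ * Real.sqrt (1 + x)) *
      Kbessel ((l₁ - l₃) / 2) (2 * π * y₂ * Real.sqrt (1 + x⁻¹)) *
      (x : ℂ) ^ (-(3 * l₂ / 4) - 1)

open MeasureTheory Set Real

def maxInv (y : ℝ) : ℝ := max y y⁻¹

section maxInv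

variable {x y : ℝ}

lemma le_maxInv (y : ℝ) : y ≤ maxInv y := le_max_left _ _

lemma inv_le_maxInv (y : ℝ) : y⁻¹ ≤ maxInv y := le_max_right _ _

lemma maxInv_of_one_le (h : 1 ≤ y) : maxInv y = y :=
  max_eq_left ((inv_le_one_of_one_le₀ h).trans h)

lemma maxInv_of_le_one (hy : 0 < y) (h : y ≤ 1) : maxInv y = y⁻¹ :=
  max_eq_right (h.trans ((one_le_inv₀ hy).2 h))

lemma one_le_maxInv (hy : 0 < y) : 1 ≤ maxInv y := by
  rcases le_total 1 y with h | h
  · exact h.trans (le_maxInv y)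
  · exact ((one_le_inv₀ hy).2 h).trans (inv_le_maxInv y)

lemma maxInv_pos (hy : 0 < y) : 0 < maxInv y := one_pos.trans_le (one_le_maxInv hy)

lemma maxInv_mul_le (hx : 0 < x) (hy : 0 < y) : maxInv (x * y) ≤ maxInv x * maxInv y := by
  refine max_le (mul_le_mul (le_maxInv x) (le_maxInv y) hy.le (maxInv_pos hx).le) ?_
  rw [mul_inv]
  exact mul_le_mul (inv_le_maxInv x) (inv_le_maxInv y) (inv_pos.2 hy).le (maxInv_pos hx).le

lemma maxInv_mul_rpow_le (hx : 0 < x) (hy : 0 < y) {P : ℝ} (hP : 0 ≤ P) :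
    maxInv (x * y) ^ P ≤ maxInv x ^ P * maxInv y ^ P := by
  rw [← mul_rpow (maxInv_pos hx).le (maxInv_pos hy).le]
  exact rpow_le_rpow (maxInv_pos (mul_pos hx hy)).le (maxInv_mul_le hx hy) hP

lemma rpow_le_maxInv_rpow_abs (hy : 0 < y) (a : ℝ) : y ^ a ≤ maxInv y ^ |a| := by
  rcases le_total 1 y with h | h
  · rw [maxInv_of_one_le h]
    exact rpow_le_rpow_of_exponent_le h (le_abs_self a)
  · rw [maxInv_of_le_one hy h, inv_rpow hy.le, ← rpow_neg hy.le]
    exact rpow_le_rpow_of_exponent_ge hy h (neg_abs_le a)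

lemma maxInv_rpow_le_rpow_add_rpow_neg (hy : 0 < y) (N : ℝ) :
    maxInv y ^ N ≤ y ^ N + y ^ (-N) := by
  rcases le_total y y⁻¹ with h | h
  · rw [maxInv, max_eq_right h, inv_rpow hy.le, ← rpow_neg hy.le]
    linarith [rpow_pos_of_pos hy N]
  · rw [maxInv, max_eq_left h]
    linarith [rpow_pos_of_pos hy (-N)]

lemma rpow_mul_maxInv_rpow_le (hy : 0 < y) {r P N : ℝ} (h : |r| + P ≤ N) :
    y ^ r * maxInv y ^ P ≤ y ^ N + y ^ (-N) :=
  calc y ^ r * maxInv y ^ P ≤ maxInv y ^ |r| * maxInv y ^ P := by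
        gcongr
        · exact (rpow_pos_of_pos (maxInv_pos hy) P).le
        · exact rpow_le_maxInv_rpow_abs hy r
    _ = maxInv y ^ (|r| + P) := (rpow_add (maxInv_pos hy) _ _).symm
    _ ≤ maxInv y ^ N := rpow_le_rpow_of_exponent_le (one_le_maxInv hy) h
    _ ≤ y ^ N + y ^ (-N) := maxInv_rpow_le_rpow_add_rpow_neg hy N

lemma inv_mul_maxInv_le (hx : 0 < x) (hy : 0 < y) : (maxInv x * maxInv y)⁻¹ ≤ x :=
  calc (maxInv x * maxInv y)⁻¹ ≤ (maxInv x)⁻¹ :=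
        inv_anti₀ (maxInv_pos hx) (le_mul_of_one_le_right (maxInv_pos hx).le (one_le_maxInv hy))
    _ ≤ x := inv_le_of_inv_le₀ hx (inv_le_maxInv x)

lemma inv_maxInv_sq_le (hx : 0 < x) : (maxInv x ^ 2)⁻¹ ≤ 2 * (1 + x ^ 2)⁻¹ := by
  have h1 : 1 ≤ maxInv x ^ 2 := one_le_pow₀ (one_le_maxInv hx)
  have h2 : x ^ 2 ≤ maxInv x ^ 2 := pow_le_pow_left₀ hx.le (le_maxInv x) 2
  calc (maxInv x ^ 2)⁻¹ = 2 * (2 * maxInv x ^ 2)⁻¹ := by field_simp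
    _ ≤ 2 * (1 + x ^ 2)⁻¹ := by gcongr; linarith

end maxInv

lemma exp_neg_le_rpow_mul_rpow_neg {A L : ℝ} (hA : 0 < A) (hL : 0 < L) :
    exp (-A) ≤ L ^ L * A ^ (-L) := by
  have hpow : (A / L) ^ L ≤ exp A :=
    calc (A / L) ^ L ≤ exp (A / L) ^ L :=
          rpow_le_rpow (by positivity) (by linarith [add_one_le_exp (A / L)]) hL.le
      _ = exp A := by rw [← exp_mul, div_mul_cancel₀ A hL.ne']
  rw [div_rpow hA.le hL.le, div_le_iff₀ (by positivity)] at hpow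
  rw [exp_neg, rpow_neg hA.le]
  have := rpow_pos_of_pos hA L
  have := exp_pos A
  field_simp
  linarith

lemma Complex.norm_cosh_le_exp_norm (w : ℂ) : ‖Complex.cosh w‖ ≤ Real.exp ‖w‖ := by
  have h₁ := Complex.norm_exp_le_exp_norm w
  have h₂ := Complex.norm_exp_le_exp_norm (-w)
  have h := norm_add_le (Complex.exp w) (Complex.exp (-w))
  rw [norm_neg] at h₂
  rw [← Complex.two_cosh, norm_mul, Complex.norm_two] at h
  linarith

lemma exp_mul_sub_mul_cosh_sub_one_le {u M : ℝ} (hu : 0 < u) (hM : 0 < M) (t : ℝ) :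
    exp (M * t - u * (cosh t - 1)) ≤ 4 ^ M * (1 + M ^ M * u ^ (-M)) := by
  set A := u * (cosh t - 1)
  have hA : 0 ≤ A := mul_nonneg hu.le (by linarith [one_le_cosh t])
  have het : exp t ≤ 2 + 2 * (A / u) := by
    rw [mul_div_cancel_left₀ _ hu.ne', cosh_eq]
    linarith [exp_pos (-t)]
  have hMM : 0 < M ^ M * u ^ (-M) := by positivity
  rw [sub_eq_add_neg, exp_add, mul_comm M t, exp_mul]
  -- `exp t ≤ 4` when `A ≤ u`; otherwise `exp t ≤ 4 A / u` and `exp (-A)` absorbs `A ^ M`.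
  rcases le_total A u with h | h
  · have h4 : exp t ≤ 4 := het.trans (by linarith [(div_le_one hu).2 h])
    calc exp t ^ M * exp (-A) ≤ 4 ^ M * 1 :=
          mul_le_mul (rpow_le_rpow (exp_pos t).le h4 hM.le) (exp_le_one_iff.2 (by linarith))
            (exp_pos _).le (by positivity)
      _ ≤ 4 ^ M * (1 + M ^ M * u ^ (-M)) := by gcongr; linarith
  · have hA0 : 0 < A := hu.trans_le h
    have h4 : exp t ≤ 4 * A * u⁻¹ := by
      have : 1 ≤ A / u := (one_le_div hu).2 h
      rw [div_eq_mul_inv] at this het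
      linarith
    calc exp t ^ M * exp (-A) ≤ (4 * A * u⁻¹) ^ M * (M ^ M * A ^ (-M)) :=
          mul_le_mul (rpow_le_rpow (exp_pos t).le h4 hM.le) (exp_neg_le_rpow_mul_rpow_neg hA0 hM)
            (exp_pos _).le (by positivity)
      _ = 4 ^ M * (M ^ M * u ^ (-M)) := by
          rw [mul_rpow (by positivity) (by positivity), mul_rpow (by positivity) hA0.le,
            inv_rpow hu.le, ← rpow_neg hu.le, rpow_neg hA0.le]
          field_simp
      _ ≤ 4 ^ M * (1 + M ^ M * u ^ (-M)) := by gcongr; linarith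

lemma norm_exp_mul_cosh_le (ν : ℂ) (u : ℝ) {t : ℝ} (ht : 0 ≤ t) :
    ‖Complex.exp (-(u : ℂ) * cosh t) * Complex.cosh (ν * t)‖ ≤ exp (‖ν‖ * t - u * cosh t) := by
  have hre : (-(u : ℂ) * cosh t).re = -(u * cosh t) := by
    rw [← Complex.ofReal_neg, ← Complex.ofReal_mul, Complex.ofReal_re, neg_mul]
  rw [norm_mul, Complex.norm_exp, hre, sub_eq_neg_add, exp_add]
  refine mul_le_mul_of_nonneg_left ?_ (exp_pos _).le
  simpa [abs_of_nonneg ht] using Complex.norm_cosh_le_exp_norm (ν * t)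

theorem norm_Kbessel_le (ν : ℂ) {u : ℝ} (hu : 0 < u) :
    ‖Kbessel ν u‖ ≤
      4 ^ (‖ν‖ + 1) * (1 + (‖ν‖ + 1) ^ (‖ν‖ + 1) * u ^ (-(‖ν‖ + 1))) * exp (-u) := by
  set M := ‖ν‖ + 1
  set B := 4 ^ M * (1 + M ^ M * u ^ (-M))
  have hpt : ∀ t ∈ Ioi (0 : ℝ), ‖Complex.exp (-(u : ℂ) * cosh t) * Complex.cosh (ν * t)‖ ≤
      B * exp (-u) * exp (-t) := fun t ht ↦
    calc _ ≤ exp (‖ν‖ * t - u * cosh t) := norm_exp_mul_cosh_le ν u (le_of_lt ht)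
      _ = exp (M * t - u * (cosh t - 1)) * exp (-u) * exp (-t) := by
          rw [← exp_add, ← exp_add]; congr 1; ring
      _ ≤ B * exp (-u) * exp (-t) := by
          gcongr; exact exp_mul_sub_mul_cosh_sub_one_le hu (by positivity) t
  have hexp : IntegrableOn (fun t : ℝ ↦ exp (-t)) (Ioi 0) := by
    simpa using exp_neg_integrableOn_Ioi 0 one_pos
  have hint := hexp.const_mul (B * exp (-u))
  calc ‖Kbessel ν u‖ ≤ ∫ t in Ioi 0, B * exp (-u) * exp (-t) :=
        norm_integral_le_of_norm_le hint ((ae_restrict_iff' measurableSet_Ioi).2 (ae_of_all _ hpt))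
    _ = B * exp (-u) := by rw [integral_const_mul, integral_exp_neg_Ioi_zero, mul_one]

lemma norm_Kbessel_le_maxInv (ν : ℂ) : ∃ C M : ℝ, 0 < C ∧ 0 ≤ M ∧
    ∀ a u : ℝ, 0 < a → a ≤ u → ‖Kbessel ν u‖ ≤ C * maxInv a ^ M * exp (-u) := by
  set M := ‖ν‖ + 1
  refine ⟨4 ^ M * (1 + M ^ M), M, by positivity, by positivity, fun a u ha hau ↦ ?_⟩
  have hw : 1 ≤ maxInv a ^ M := one_le_rpow (one_le_maxInv ha) (by positivity)
  have hua : u ^ (-M) ≤ maxInv a ^ M := by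
    calc u ^ (-M) ≤ a ^ (-M) := rpow_le_rpow_of_nonpos ha hau (by linarith [norm_nonneg ν])
      _ ≤ maxInv a ^ |-M| := rpow_le_maxInv_rpow_abs ha _
      _ = maxInv a ^ M := by rw [abs_neg, abs_of_pos (by positivity)]
  refine (norm_Kbessel_le ν (ha.trans_le hau)).trans ?_
  have : 1 + M ^ M * u ^ (-M) ≤ (1 + M ^ M) * maxInv a ^ M := by
    have := rpow_pos_of_pos (by positivity : (0:ℝ) < M) M
    nlinarith
  calc _ ≤ 4 ^ M * ((1 + M ^ M) * maxInv a ^ M) * exp (-u) := by gcongr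
    _ = _ := by ring

lemma one_le_sqrt_one_add {z : ℝ} (hz : 0 ≤ z) : 1 ≤ √(1 + z) :=
  one_le_sqrt.2 (le_add_of_nonneg_right hz)

lemma sqrt_le_four_mul_sqrt_one_add_sub_one {v : ℝ} (hv : 1 ≤ v) : √v ≤ 4 * (√(1 + v) - 1) := by
  have hs := sq_sqrt (by linarith : (0:ℝ) ≤ v)
  have ht := sq_sqrt (by linarith : (0:ℝ) ≤ 1 + v)
  have h1 : 1 ≤ √v := one_le_sqrt.2 hv
  nlinarith [sqrt_nonneg (1 + v), sq_nonneg (√(1 + v) - √v)]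

lemma sqrt_maxInv_le {x : ℝ} (hx : 0 < x) :
    √(maxInv x) ≤ 4 * ((√(1 + x) - 1) + (√(1 + x⁻¹) - 1)) := by
  have h₁ := one_le_sqrt_one_add hx.le
  have h₂ := one_le_sqrt_one_add (inv_pos.2 hx).le
  rcases le_total 1 x with h | h
  · rw [maxInv_of_one_le h]
    linarith [sqrt_le_four_mul_sqrt_one_add_sub_one h]
  · rw [maxInv_of_le_one hx h]
    linarith [sqrt_le_four_mul_sqrt_one_add_sub_one ((one_le_inv₀ hx).2 h)]

lemma exp_neg_sqrt_excess_le {a b x L : ℝ} (ha : 0 < a) (hb : 0 < b) (hx : 0 < x) (hL : 0 < L) :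
    exp (-(a * (√(1 + x) - 1) + b * (√(1 + x⁻¹) - 1))) ≤
      (4 * L * (maxInv a * maxInv b)) ^ L * maxInv x ^ (-(L / 2)) := by
  set c := 4 * (maxInv a * maxInv b)
  have hc : 0 < c := by have := maxInv_pos ha; have := maxInv_pos hb; positivity
  have hc₄ : 4 / c = (maxInv a * maxInv b)⁻¹ := by simp only [c]; field_simp
  have hca : 4 / c ≤ a := hc₄ ▸ inv_mul_maxInv_le ha hb
  have hcb : 4 / c ≤ b := by rw [hc₄, mul_comm]; exact inv_mul_maxInv_le hb ha
  have hs : 0 < √(maxInv x) := sqrt_pos.2 (maxInv_pos hx)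
  have hA : √(maxInv x) / c ≤ a * (√(1 + x) - 1) + b * (√(1 + x⁻¹) - 1) := by
    have h₁ := one_le_sqrt_one_add hx.le
    have h₂ := one_le_sqrt_one_add (inv_pos.2 hx).le
    have := sqrt_maxInv_le hx
    calc √(maxInv x) / c ≤ 4 / c * ((√(1 + x) - 1) + (√(1 + x⁻¹) - 1)) := by
          rw [div_mul_eq_mul_div]; gcongr
      _ ≤ _ := by nlinarith [sub_nonneg.2 h₁, sub_nonneg.2 h₂]
  calc _ ≤ exp (-(√(maxInv x) / c)) := exp_le_exp.2 (by linarith)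
    _ ≤ L ^ L * (√(maxInv x) / c) ^ (-L) := exp_neg_le_rpow_mul_rpow_neg (by positivity) hL
    _ = (4 * L * (maxInv a * maxInv b)) ^ L * maxInv x ^ (-(L / 2)) := by
      rw [div_rpow hs.le hc.le, rpow_neg (by positivity), rpow_neg hc.le,
        rpow_neg (maxInv_pos hx).le, rpow_div_two_eq_sqrt _ (maxInv_pos hx).le,
        show 4 * L * (maxInv a * maxInv b) = L * c by ring, mul_rpow hL.le hc.le]
      field_simp

lemma rpow_mul_maxInv_rpow_neg_le {x e L : ℝ} (hx : 0 < x) (hL : 2 * |e| + 4 ≤ L) :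
    x ^ e * maxInv x ^ (-(L / 2)) ≤ 2 * (1 + x ^ 2)⁻¹ := by
  have hw := maxInv_pos hx
  calc x ^ e * maxInv x ^ (-(L / 2)) ≤ maxInv x ^ |e| * maxInv x ^ (-(L / 2)) :=
        mul_le_mul_of_nonneg_right (rpow_le_maxInv_rpow_abs hx e) (rpow_pos_of_pos hw _).le
    _ = maxInv x ^ (|e| - L / 2) := by rw [← rpow_add hw, sub_eq_add_neg]
    _ ≤ maxInv x ^ (-2 : ℝ) := rpow_le_rpow_of_exponent_le (one_le_maxInv hx) (by linarith)
    _ = (maxInv x ^ 2)⁻¹ := by rw [rpow_neg hw.le]; norm_cast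
    _ ≤ 2 * (1 + x ^ 2)⁻¹ := inv_maxInv_sq_le hx

theorem norm_integral_Kbessel_mul_Kbessel_le (ν γ : ℂ) : ∃ C P : ℝ, 0 < C ∧ 0 ≤ P ∧
    ∀ a b : ℝ, 0 < a → 0 < b →
      ‖∫ x in Ioi (0:ℝ), Kbessel ν (a * √(1 + x)) * Kbessel ν (b * √(1 + x⁻¹)) * (x : ℂ) ^ γ‖ ≤
        C * (maxInv a * maxInv b) ^ P * exp (-(a + b)) := by
  obtain ⟨C, M, hC, hM, hK⟩ := norm_Kbessel_le_maxInv ν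
  set L := 2 * |γ.re| + 4
  have hL : 0 < L := by positivity
  refine ⟨C ^ 2 * (4 * L) ^ L * π, M + L, by positivity, by positivity, fun a b ha hb ↦ ?_⟩
  have hwa := maxInv_pos ha
  have hwb := maxInv_pos hb
  have hwab : 0 < maxInv a * maxInv b := mul_pos hwa hwb
  set G := 2 * C ^ 2 * (4 * L) ^ L * (maxInv a * maxInv b) ^ (M + L) * exp (-(a + b))
  have hpt : ∀ x ∈ Ioi (0:ℝ), ‖Kbessel ν (a * √(1 + x)) * Kbessel ν (b * √(1 + x⁻¹)) *
      (x : ℂ) ^ γ‖ ≤ G * (1 + x ^ 2)⁻¹ := by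
    intro x (hx : 0 < x)
    have hK₁ := hK a _ ha (le_mul_of_one_le_right ha.le (one_le_sqrt_one_add hx.le))
    have hK₂ := hK b _ hb (le_mul_of_one_le_right hb.le (one_le_sqrt_one_add (inv_pos.2 hx).le))
    have hexp : exp (-(a * √(1 + x))) * exp (-(b * √(1 + x⁻¹))) =
        exp (-(a + b)) * exp (-(a * (√(1 + x) - 1) + b * (√(1 + x⁻¹) - 1))) := by
      rw [← exp_add, ← exp_add]; ring_nf
    rw [norm_mul, norm_mul, Complex.norm_cpow_eq_rpow_re_of_pos hx]
    calc _ ≤ C * maxInv a ^ M * exp (-(a * √(1 + x))) *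
            (C * maxInv b ^ M * exp (-(b * √(1 + x⁻¹)))) * x ^ γ.re := by
          gcongr
      _ = C ^ 2 * (maxInv a * maxInv b) ^ M * exp (-(a + b)) *
            exp (-(a * (√(1 + x) - 1) + b * (√(1 + x⁻¹) - 1))) * x ^ γ.re := by
          rw [mul_rpow hwa.le hwb.le]
          linear_combination (C ^ 2 * maxInv a ^ M * maxInv b ^ M * x ^ γ.re) * hexp
      _ ≤ C ^ 2 * (maxInv a * maxInv b) ^ M * exp (-(a + b)) *
            ((4 * L * (maxInv a * maxInv b)) ^ L * maxInv x ^ (-(L / 2))) * x ^ γ.re := by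
          gcongr; exact exp_neg_sqrt_excess_le ha hb hx hL
      _ = C ^ 2 * (4 * L) ^ L * (maxInv a * maxInv b) ^ (M + L) * exp (-(a + b)) *
            (x ^ γ.re * maxInv x ^ (-(L / 2))) := by
          rw [mul_rpow (by positivity) hwab.le, rpow_add hwab M L]; ring
      _ ≤ C ^ 2 * (4 * L) ^ L * (maxInv a * maxInv b) ^ (M + L) * exp (-(a + b)) *
            (2 * (1 + x ^ 2)⁻¹) :=
          mul_le_mul_of_nonneg_left (rpow_mul_maxInv_rpow_neg_le hx le_rfl) (by positivity)
      _ = G * (1 + x ^ 2)⁻¹ := by ring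
  calc _ ≤ ∫ x in Ioi (0:ℝ), G * (1 + x ^ 2)⁻¹ :=
        norm_integral_le_of_norm_le (integrable_inv_one_add_sq.integrableOn.const_mul G)
          ((ae_restrict_iff' measurableSet_Ioi).2 (ae_of_all _ hpt))
    _ = C ^ 2 * (4 * L) ^ L * π * (maxInv a * maxInv b) ^ (M + L) * exp (-(a + b)) := by
        rw [integral_const_mul, integral_Ioi_inv_one_add_sq, arctan_zero]; ring

lemma norm_W (l₁ l₂ l₃ : ℂ) {y₁ y₂ : ℝ} (hy₁ : 0 < y₁) (hy₂ : 0 < y₂) :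
    ‖W l₁ l₂ l₃ y₁ y₂‖ = 4 * y₁ ^ (1 - l₂ / 2).re * y₂ ^ (1 + l₂ / 2).re *
      ‖∫ x in Ioi (0:ℝ), Kbessel ((l₁ - l₃) / 2) (2 * π * y₁ * √(1 + x)) *
        Kbessel ((l₁ - l₃) / 2) (2 * π * y₂ * √(1 + x⁻¹)) * (x : ℂ) ^ (-(3 * l₂ / 4) - 1)‖ := by
  simp only [W, norm_mul, Complex.norm_cpow_eq_rpow_re_of_pos hy₁,
    Complex.norm_cpow_eq_rpow_re_of_pos hy₂]
  norm_num

theorem statement6_general (l₁ l₂ l₃ : ℂ) :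
    ∃ C : ℝ, 0 < C ∧ ∃ N : ℝ, 0 < N ∧ ∀ y₁ y₂ : ℝ, 0 < y₁ → 0 < y₂ →
      ‖W l₁ l₂ l₃ y₁ y₂‖ ≤
        C * (y₁ ^ N + y₁ ^ (-N)) * (y₂ ^ N + y₂ ^ (-N)) *
          Real.exp (-(2 * π) * (y₁ + y₂)) := by
  obtain ⟨C, P, hC, hP, hI⟩ :=
    norm_integral_Kbessel_mul_Kbessel_le ((l₁ - l₃) / 2) (-(3 * l₂ / 4) - 1)
  set p := (1 - l₂ / 2).re
  set q := (1 + l₂ / 2).re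
  have h2π : 0 < 2 * π := by positivity
  have hw := maxInv_pos h2π
  refine ⟨4 * C * maxInv (2 * π) ^ (2 * P), by positivity, |p| + |q| + P + 1, by positivity,
    fun y₁ y₂ hy₁ hy₂ ↦ ?_⟩
  have h₁ := maxInv_mul_rpow_le h2π hy₁ hP
  have h₂ := maxInv_mul_rpow_le h2π hy₂ hP
  have := maxInv_pos hy₁
  have := maxInv_pos hy₂
  calc ‖W l₁ l₂ l₃ y₁ y₂‖
      ≤ 4 * y₁ ^ p * y₂ ^ q * (C * (maxInv (2 * π * y₁) * maxInv (2 * π * y₂)) ^ P *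
          exp (-(2 * π * y₁ + 2 * π * y₂))) := by
        rw [norm_W l₁ l₂ l₃ hy₁ hy₂]
        gcongr
        exact hI _ _ (by positivity) (by positivity)
    _ ≤ 4 * y₁ ^ p * y₂ ^ q * (C * ((maxInv (2 * π) ^ P * maxInv y₁ ^ P) *
          (maxInv (2 * π) ^ P * maxInv y₂ ^ P)) * exp (-(2 * π * y₁ + 2 * π * y₂))) := by
        rw [mul_rpow (maxInv_pos (by positivity)).le (maxInv_pos (by positivity)).le]
        gcongr
        exact (rpow_pos_of_pos (maxInv_pos (by positivity)) _).le
    _ = 4 * C * maxInv (2 * π) ^ (2 * P) * (y₁ ^ p * maxInv y₁ ^ P) * (y₂ ^ q * maxInv y₂ ^ P) *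
          exp (-(2 * π) * (y₁ + y₂)) := by
        rw [two_mul P, rpow_add hw]; ring_nf
    _ ≤ _ := by
        gcongr
        · exact rpow_mul_maxInv_rpow_le hy₁ (by linarith [abs_nonneg q])
        · exact rpow_mul_maxInv_rpow_le hy₂ (by linarith [abs_nonneg p])

theorem statement6 (l₁ l₂ l₃ : ℂ) (hsum : l₁ + l₂ + l₃ = 0) :
    ∃ C : ℝ, 0 < C ∧ ∃ N : ℝ, 0 < N ∧ ∀ y₁ y₂ : ℝ, 0 < y₁ → 0 < y₂ →
      ‖W l₁ l₂ l₃ y₁ y₂‖ ≤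
        C * (y₁ ^ N + y₁ ^ (-N)) * (y₂ ^ N + y₂ ^ (-N)) *
          Real.exp (-(2 * π) * (y₁ + y₂)) :=
  statement6_general l₁ l₂ l₃
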